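/- arXiv:2506.07508 — 2 statements merged into one kernel-verified Lean document; each statement's English description precedes it below -/
import Mathlib

section
/- Let (Y_n) be random variables, (a_n) ⊂ (0,1] with a_n ↓ 0 and a_n ln n → ∞. Set V_n := |Y_n|^{a_n} and assume there is a nonincreasing Ḡ : [0,∞) → [0,∞) with sup_n P(V_n > t) ≤ Ḡ(t) and ∫_0^∞ Ḡ(t) dt < ∞. Then almost surely ∑_{n=1}^∞ |Y_n| / n^{1/a_n} < ∞. -/
/-!
Write `V n = |Y n| ^ a n`, so that `|Y n| / n ^ (1 / a n) = (V n / n) ^ (1 / a n)`. By the layer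
cake formula, `E[(min (V n) n / n) ^ 2] = ∫₀ⁿ P(V n > t) 2t / n² dt ≤ ∫₀ⁿ G t 2t / n² dt`, and since
`2t ∑_{n > t} n⁻² ≤ 4`, summing over `n` gives `∑ E[(min (V n) n / n) ^ 2] ≤ 4 ∫ G < ∞`. Hence
`∑ (min (V n) n / n) ^ 2 < ∞` almost surely. Its terms tend to `0`, so eventually `V n < n`; as
also `a n ≤ 1/2` eventually, `(V n / n) ^ (1 / a n) ≤ (V n / n) ^ 2` for large `n`.
-/

open MeasureTheory ProbabilityTheory Filter Topology Real

open Set ENNReal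

theorem tsum_indicator_Iio_two_mul_div_sq_le {t : ℝ} (ht : 0 ≤ t) :
    ∑' n : ℕ, (Iio (n : ℝ)).indicator (fun s => ENNReal.ofReal (2 * s / n ^ 2)) t ≤ 4 := by
  refine ENNReal.tsum_le_of_sum_range_le fun N => ?_
  calc ∑ n ∈ Finset.range N, (Iio (n : ℝ)).indicator (fun s => ENNReal.ofReal (2 * s / n ^ 2)) t
      = ∑ n ∈ (Finset.range N).filter (fun n : ℕ => t < n), ENNReal.ofReal (2 * t / n ^ 2) := by
        simp only [Finset.sum_filter, indicator_apply, mem_Iio]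
    _ ≤ ∑ n ∈ Finset.Ioo ⌊t⌋₊ N, ENNReal.ofReal (2 * t / n ^ 2) := by
        refine Finset.sum_le_sum_of_subset fun n hn => ?_
        simp only [Finset.mem_filter, Finset.mem_range] at hn
        exact Finset.mem_Ioo.2 ⟨(Nat.floor_lt ht).2 hn.2, hn.1⟩
    _ = ENNReal.ofReal (2 * t * ∑ n ∈ Finset.Ioo ⌊t⌋₊ N, ((n : ℝ) ^ 2)⁻¹) := by
        rw [Finset.mul_sum, ENNReal.ofReal_sum_of_nonneg (fun n _ => by positivity)]
        simp only [div_eq_mul_inv]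
    _ ≤ ENNReal.ofReal (2 * t * (2 / (⌊t⌋₊ + 1))) := by
        gcongr
        exact sum_Ioo_inv_sq_le _ _
    _ ≤ 4 := by
        rw [ENNReal.ofReal_le_iff_le_toReal (by simp), toReal_ofNat, mul_div_assoc',
          div_le_iff₀ (by positivity)]
        nlinarith [Nat.lt_floor_add_one t]

theorem lintegral_ofReal_min_div_sq {Ω : Type*} [MeasurableSpace Ω] {μ : Measure Ω}
    {X : Ω → ℝ} (hX : AEMeasurable X μ) (hX0 : 0 ≤ᵐ[μ] X) {c : ℝ} (hc : 0 ≤ c) :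
    ∫⁻ ω, ENNReal.ofReal ((min (X ω) c / c) ^ 2) ∂μ =
      ∫⁻ t in Ioi 0, μ {ω | t < X ω} *
        (Iio c).indicator (fun s => ENNReal.ofReal (2 * s / c ^ 2)) t := by
  have hprimitive : ∀ x : ℝ, ∫ s in (0 : ℝ)..x, 2 * s / c ^ 2 = (x / c) ^ 2 := by
    intro x
    simp only [mul_div_right_comm _ _ (c ^ 2)]
    rw [intervalIntegral.integral_const_mul, integral_id]
    ring
  have hlayer := lintegral_comp_eq_lintegral_meas_lt_mul μ (f := fun ω => min (X ω) c)
    (g := fun s => 2 * s / c ^ 2)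
    (by filter_upwards [hX0] with ω hω using le_min hω hc) (hX.min aemeasurable_const)
    (fun t _ => (by fun_prop : Continuous _).intervalIntegrable _ _)
    ((ae_restrict_iff' measurableSet_Ioi).2 (ae_of_all _ fun t (ht : 0 < t) => by positivity))
  simp only [hprimitive] at hlayer
  rw [hlayer]
  refine setLIntegral_congr_fun measurableSet_Ioi fun t _ => ?_
  by_cases htc : t < c <;> simp [htc]

theorem tsum_lintegral_ofReal_min_div_sq_le {Ω : Type*} [MeasurableSpace Ω] {μ : Measure Ω}
    {X : ℕ → Ω → ℝ} (hX : ∀ n, AEMeasurable (X n) μ) (hX0 : ∀ n, 0 ≤ᵐ[μ] X n) {G : ℝ → ℝ}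
    (hdom : ∀ n t, 0 < t → μ {ω | t < X n ω} ≤ ENNReal.ofReal (G t)) :
    ∑' n : ℕ, ∫⁻ ω, ENNReal.ofReal ((min (X n ω) n / n) ^ 2) ∂μ ≤
      4 * ∫⁻ t in Ioi 0, ENNReal.ofReal (G t) := by
  have htail_meas : ∀ n, Measurable fun t : ℝ => μ {ω | t < X n ω} := fun n =>
    Antitone.measurable fun s t hst => measure_mono fun ω (h : t < X n ω) => hst.trans_lt h
  calc ∑' n : ℕ, ∫⁻ ω, ENNReal.ofReal ((min (X n ω) n / n) ^ 2) ∂μ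
      = ∫⁻ t in Ioi 0, ∑' n : ℕ, μ {ω | t < X n ω} *
          (Iio (n : ℝ)).indicator (fun s => ENNReal.ofReal (2 * s / n ^ 2)) t := by
        simp only [lintegral_ofReal_min_div_sq (hX _) (hX0 _) (Nat.cast_nonneg _)]
        refine (lintegral_tsum fun n => ?_).symm
        exact ((htail_meas n).mul
          ((Measurable.ennreal_ofReal (by fun_prop)).indicator measurableSet_Iio)).aemeasurable
    _ ≤ ∫⁻ t in Ioi 0, ENNReal.ofReal (G t) * 4 := by
        refine setLIntegral_mono' measurableSet_Ioi fun t (ht : 0 < t) => ?_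
        calc ∑' n : ℕ, μ {ω | t < X n ω} *
              (Iio (n : ℝ)).indicator (fun s => ENNReal.ofReal (2 * s / n ^ 2)) t
            ≤ ∑' n : ℕ, ENNReal.ofReal (G t) *
              (Iio (n : ℝ)).indicator (fun s => ENNReal.ofReal (2 * s / n ^ 2)) t := by
              gcongr with n
              exact hdom n t ht
          _ ≤ ENNReal.ofReal (G t) * 4 := by
              rw [ENNReal.tsum_mul_left]
              gcongr
              exact tsum_indicator_Iio_two_mul_div_sq_le ht.le
    _ = 4 * ∫⁻ t in Ioi 0, ENNReal.ofReal (G t) := by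
        rw [lintegral_mul_const' _ _ ofNat_ne_top, mul_comm]

theorem ae_summable_of_tsum_lintegral_ofReal_ne_top {Ω ι : Type*} [MeasurableSpace Ω]
    [Countable ι] {μ : Measure Ω} {f : ι → Ω → ℝ} (hf : ∀ i, AEMeasurable (f i) μ)
    (hf0 : ∀ i ω, 0 ≤ f i ω) (h : ∑' i, ∫⁻ ω, ENNReal.ofReal (f i ω) ∂μ ≠ ∞) :
    ∀ᵐ ω ∂μ, Summable fun i => f i ω := by
  have hmeas : ∀ i, AEMeasurable (fun ω => ENNReal.ofReal (f i ω)) μ := fun i =>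
    (hf i).ennreal_ofReal
  rw [← lintegral_tsum hmeas] at h
  filter_upwards [ae_lt_top' (AEMeasurable.tsum hmeas) h] with ω hω
  simpa only [ENNReal.toReal_ofReal (hf0 _ ω)] using ENNReal.summable_toReal hω.ne

theorem abs_div_rpow_one_div_le_sq {y b c : ℝ} (hb : 0 < b) (hb2 : b ≤ 1 / 2) (hc : 0 < c)
    (hy : |y| ^ b ≤ c) : |y| / c ^ (1 / b) ≤ (|y| ^ b / c) ^ 2 := by
  calc |y| / c ^ (1 / b) = (|y| ^ b / c) ^ (1 / b) := by
        rw [Real.div_rpow (by positivity) hc.le, ← Real.rpow_mul (abs_nonneg y),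
          mul_one_div_cancel hb.ne', Real.rpow_one]
    _ ≤ (|y| ^ b / c) ^ (2 : ℝ) :=
        Real.rpow_le_rpow_of_exponent_ge' (by positivity) ((div_le_one hc).2 hy) zero_le_two
          (by rw [le_div_iff₀ hb]; linarith)
    _ = (|y| ^ b / c) ^ 2 := Real.rpow_two _

theorem lemma_Y_series_general {Ω : Type*} [MeasureSpace Ω]
    (Y : ℕ → Ω → ℝ) (hYm : ∀ n, Measurable (Y n))
    (a : ℕ → ℝ) (ha : ∀ n, 0 < a n ∧ a n ≤ 1)
    (ha0 : Tendsto a atTop (𝓝 0))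
    (G : ℝ → ℝ)
    (hGint : IntegrableOn G (Set.Ioi 0))
    (hdom : ∀ n t, 0 ≤ t → ℙ {ω | t < |Y n ω| ^ (a n)} ≤ ENNReal.ofReal (G t)) :
    ∀ᵐ ω ∂ℙ, Summable fun n : {n : ℕ // 1 ≤ n} =>
      |Y n.1 ω| / (n.1 : ℝ) ^ (1 / a n.1) := by
  set V : ℕ → Ω → ℝ := fun n ω => |Y n ω| ^ a n
  have hV : ∀ n, Measurable (V n) := fun n => by fun_prop
  have hV0 : ∀ n ω, 0 ≤ V n ω := fun n ω => by positivity
  have hmoment : ∑' n : ℕ, ∫⁻ ω, ENNReal.ofReal ((min (V n ω) n / n) ^ 2) ≠ ∞ :=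
    ne_top_of_le_ne_top (mul_ne_top ofNat_ne_top hGint.setLIntegral_lt_top.ne)
      (tsum_lintegral_ofReal_min_div_sq_le (fun n => (hV n).aemeasurable)
        (fun n => ae_of_all _ (hV0 n)) fun n t ht => hdom n t ht.le)
  filter_upwards [ae_summable_of_tsum_lintegral_ofReal_ne_top
    (fun n => by fun_prop) (fun n ω => by positivity) hmoment] with ω hω
  refine Summable.subtype (f := fun n : ℕ => |Y n ω| / (n : ℝ) ^ (1 / a n)) ?_ _
  refine .of_norm_bounded_eventually_nat hω ?_
  filter_upwards [hω.tendsto_atTop_zero.eventually (gt_mem_nhds one_pos),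
    ha0.eventually (eventually_le_nhds one_half_pos), eventually_gt_atTop 0]
    with n hlt_one han hn
  have hn : (0 : ℝ) < n := Nat.cast_pos.2 hn
  have hVn : V n ω < n := by
    by_contra! h
    rw [min_eq_right h, div_self hn.ne', one_pow] at hlt_one
    exact lt_irrefl _ hlt_one
  rw [Real.norm_of_nonneg (by positivity), min_eq_left hVn.le]
  exact abs_div_rpow_one_div_le_sq (ha n).1 han hn hVn.le

theorem lemma_Y_series {Ω : Type*} [MeasureSpace Ω]
    [IsProbabilityMeasure (ℙ : Measure Ω)]
    (Y : ℕ → Ω → ℝ) (hYm : ∀ n, Measurable (Y n))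
    (a : ℕ → ℝ) (ha : ∀ n, 0 < a n ∧ a n ≤ 1) (hanti : Antitone a)
    (ha0 : Tendsto a atTop (𝓝 0))
    (halog : Tendsto (fun n => a n * Real.log n) atTop atTop)
    (G : ℝ → ℝ) (hG0 : ∀ t, 0 ≤ t → 0 ≤ G t) (hGanti : AntitoneOn G (Set.Ici 0))
    (hGint : IntegrableOn G (Set.Ioi 0))
    (hdom : ∀ n t, 0 ≤ t → ℙ {ω | t < |Y n ω| ^ (a n)} ≤ ENNReal.ofReal (G t)) :
    ∀ᵐ ω ∂ℙ, Summable fun n : {n : ℕ // 1 ≤ n} =>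
      |Y n.1 ω| / (n.1 : ℝ) ^ (1 / a n.1) :=
  lemma_Y_series_general Y hYm a ha ha0 G hGint hdom
end

section
/- Under the same assumptions (a_n ∈ (0,1], a_n ↓ 0, a_n ln n → ∞, V_n := |Y_n|^{a_n} with tails dominated by a nonincreasing integrable Ḡ), one has (1/n^{1/a_n}) ∑_{k=1}^n Y_k → 0 almost surely. -/
/-!
Put `b n = n ^ (1 / a n)` and `V n = |Y n| ^ a n`, so that `|Y n| / b n = (V n / n) ^ (1 / a n)`.
Once `a n ≤ 1 / 2` this gives `min (|Y n| / b n) 1 ≤ min ((V n / n) ^ 2) 1`, and the right-hand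
side has summable expectations: cutting `V n / n` into the dyadic layers `(2^-(j+1), 2^-j]` bounds
the `n`-th expectation by `∑ⱼ 4^-j G (n 2^-(j+1))`, and summing over `n` first uses
`∑ₙ G (n c) ≤ c⁻¹ ∫ G` for the nonincreasing `G`. Hence `∑ |Y n| / b n < ∞` almost surely, and
Kronecker's lemma applies because `b` is nondecreasing (as `a` is nonincreasing) and unbounded.
-/

open MeasureTheory ProbabilityTheory Filter Topology Real
open Set
open scoped ENNReal

lemma min_rpow_one_le_min_rpow_one {w p q : ℝ} (hw : 0 ≤ w) (hp : 0 ≤ p) (hpq : p ≤ q) :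
    min (w ^ q) 1 ≤ min (w ^ p) 1 := by
  rcases le_or_gt w 1 with hw1 | hw1
  · exact min_le_min_right _ (Real.rpow_le_rpow_of_exponent_ge' hw hw1 hp hpq)
  · rw [min_eq_right (Real.one_le_rpow hw1.le hp)]
    exact min_le_right _ _

lemma min_div_rpow_one_div_le_min_sq {y x a : ℝ} (hy : 0 ≤ y) (hx : 0 ≤ x) (ha : 0 < a)
    (ha2 : a ≤ 1 / 2) : min (y / x ^ (1 / a)) 1 ≤ min ((y ^ a / x) ^ 2) 1 := by
  have h2 : (2 : ℝ) ≤ 1 / a := by rw [le_div_iff₀ ha]; linarith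
  have hyx : y / x ^ (1 / a) = (y ^ a / x) ^ (1 / a) := by
    rw [Real.div_rpow (by positivity) hx, one_div, Real.rpow_rpow_inv hy ha.ne']
  rw [hyx, ← Real.rpow_natCast, Nat.cast_ofNat]
  exact min_rpow_one_le_min_rpow_one (by positivity) zero_le_two h2

lemma summable_of_summable_min_one {ι : Type*} {x : ι → ℝ} (hx : ∀ i, 0 ≤ x i)
    (h : Summable fun i => min (x i) 1) : Summable x := by
  refine h.of_norm_bounded_eventually ?_
  filter_upwards [h.tendsto_cofinite_zero.eventually (gt_mem_nhds one_pos)] with i hi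
  rw [Real.norm_of_nonneg (hx i), min_eq_left (min_lt_iff.mp hi |>.resolve_right (lt_irrefl 1)).le]

theorem tendsto_sum_range_div_of_summable_abs_div {b y : ℕ → ℝ} (hb0 : ∀ n, 0 < b n)
    (hb : Monotone b) (hbtop : Tendsto b atTop atTop) (hy : Summable fun n => |y n| / b n) :
    Tendsto (fun n => (∑ k ∈ Finset.range (n + 1), y k) / b n) atTop (𝓝 0) := by
  -- Tannery: the `k`-th term `(b k / b n) * (y k / b k)` tends to `0` and is bounded by
  -- `|y k| / b k`.
  have h := tendsto_tsum_of_dominated_convergence (𝓕 := atTop) (g := fun _ => (0 : ℝ)) hy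
    (f := fun n k => (Finset.range (n + 1) : Set ℕ).indicator (fun k => y k / b n) k) ?_ ?_
  · rw [tsum_zero] at h
    refine h.congr fun n => ?_
    rw [Finset.sum_div, sum_eq_tsum_indicator]
  · intro k
    refine ((tendsto_const_nhds (x := y k)).div_atTop hbtop).congr' ?_
    filter_upwards [eventually_ge_atTop k] with n hn
    rw [indicator_of_mem (by simp; omega)]
  · refine Eventually.of_forall fun n k => ?_
    by_cases hk : k ≤ n
    · rw [indicator_of_mem (by simp; omega), Real.norm_eq_abs, abs_div, abs_of_pos (hb0 n)]
      exact div_le_div_of_nonneg_left (abs_nonneg _) (hb0 k) (hb hk)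
    · rw [indicator_of_notMem (by simp; omega), norm_zero]
      exact div_nonneg (abs_nonneg _) (hb0 k).le

lemma monotone_natCast_rpow_one_div {a : ℕ → ℝ} (ha : ∀ n, 0 < a n) (hanti : Antitone a) :
    Monotone fun n : ℕ => (n : ℝ) ^ (1 / a n) := by
  intro m n hmn
  rcases Nat.eq_zero_or_pos n with rfl | hn
  · obtain rfl : m = 0 := by omega
    exact le_rfl
  calc (m : ℝ) ^ (1 / a m) ≤ (n : ℝ) ^ (1 / a m) :=
        Real.rpow_le_rpow (Nat.cast_nonneg _) (by exact_mod_cast hmn) (by have := ha m; positivity)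
    _ ≤ (n : ℝ) ^ (1 / a n) := Real.rpow_le_rpow_of_exponent_le (by exact_mod_cast hn)
        (one_div_le_one_div_of_le (ha n) (hanti hmn))

lemma tendsto_natCast_rpow_one_div_atTop {a : ℕ → ℝ} (ha : ∀ n, 0 < a n) (ha1 : ∀ n, a n ≤ 1) :
    Tendsto (fun n : ℕ => (n : ℝ) ^ (1 / a n)) atTop atTop := by
  refine tendsto_atTop_mono' _ ?_ tendsto_natCast_atTop_atTop
  filter_upwards [eventually_ge_atTop 1] with n hn
  exact Real.self_le_rpow_of_one_le (by exact_mod_cast hn) (one_le_one_div (ha n) (ha1 n))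

lemma ofReal_mul_tsum_le_lintegral_Ioi {G : ℝ → ℝ} (hG : AntitoneOn G (Ioi 0)) {c : ℝ}
    (hc : 0 < c) :
    ENNReal.ofReal c * ∑' n : ℕ, ENNReal.ofReal (G ((n + 1) * c)) ≤
      ∫⁻ t in Ioi 0, ENNReal.ofReal (G t) := by
  set I : ℕ → Set ℝ := fun n => Ioc (n * c) ((n + 1) * c)
  have hI : Pairwise (Function.onFun Disjoint I) := by
    have : Monotone fun n : ℕ => (n : ℝ) * c := fun m n h =>
      mul_le_mul_of_nonneg_right (by exact_mod_cast h) hc.le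
    simpa [I] using this.pairwise_disjoint_on_Ioc_succ
  calc ENNReal.ofReal c * ∑' n : ℕ, ENNReal.ofReal (G ((n + 1) * c))
      = ∑' n, ∫⁻ _ in I n, ENNReal.ofReal (G ((n + 1) * c)) := by
        rw [← ENNReal.tsum_mul_left]
        congr 1 with n
        rw [setLIntegral_const, Real.volume_Ioc, mul_comm]
        ring_nf
    _ ≤ ∑' n, ∫⁻ t in I n, ENNReal.ofReal (G t) := by
        refine ENNReal.tsum_le_tsum fun n => setLIntegral_mono' measurableSet_Ioc fun t ht => ?_
        have ht0 : 0 < t := lt_of_le_of_lt (by positivity) ht.1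
        exact ENNReal.ofReal_le_ofReal (hG ht0 (show (0 : ℝ) < (n + 1) * c by positivity) ht.2)
    _ = ∫⁻ t in ⋃ n, I n, ENNReal.ofReal (G t) :=
        (lintegral_iUnion (fun _ => measurableSet_Ioc) hI _).symm
    _ ≤ ∫⁻ t in Ioi 0, ENNReal.ofReal (G t) :=
        lintegral_mono_set (iUnion_subset fun n t ht => lt_of_le_of_lt (by positivity) ht.1)

lemma ofReal_min_sq_one_le_tsum_indicator {w c : ℝ} (hw : 0 ≤ w) (hc : 0 < c) :
    ENNReal.ofReal (min ((w / c) ^ 2) 1) ≤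
      ∑' j : ℕ,
        (Ioi (c * 2⁻¹ ^ (j + 1))).indicator (fun _ => ENNReal.ofReal ((2⁻¹ ^ j) ^ 2)) w := by
  rcases hw.eq_or_lt with rfl | hw0
  · simp
  obtain ⟨j, hj, hjw⟩ :
      ∃ j : ℕ, (2⁻¹ : ℝ) ^ (j + 1) < w / c ∧ min ((w / c) ^ 2) 1 ≤ (2⁻¹ ^ j) ^ 2 := by
    rcases le_or_gt (w / c) 1 with h1 | h1
    · obtain ⟨j, hlt, hle⟩ := exists_nat_pow_near_of_lt_one (by positivity) h1
        (by norm_num : (0 : ℝ) < 2⁻¹) (by norm_num)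
      exact ⟨j, hlt, (min_le_left _ _).trans (pow_le_pow_left₀ (by positivity) hle 2)⟩
    · exact ⟨0, by norm_num; linarith, by simp⟩
  refine le_trans ?_ (ENNReal.le_tsum j)
  rw [indicator_of_mem (by rwa [Set.mem_Ioi, ← lt_div_iff₀' hc])]
  exact ENNReal.ofReal_le_ofReal hjw

section

variable {Ω : Type*} [MeasurableSpace Ω] {μ : Measure Ω}

lemma lintegral_ofReal_min_sq_one_le {W : Ω → ℝ} (hW : Measurable W) (hW0 : ∀ ω, 0 ≤ W ω)
    {c : ℝ} (hc : 0 < c) :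
    ∫⁻ ω, ENNReal.ofReal (min ((W ω / c) ^ 2) 1) ∂μ ≤
      ∑' j : ℕ, ENNReal.ofReal ((2⁻¹ ^ j) ^ 2) * μ {ω | c * 2⁻¹ ^ (j + 1) < W ω} := by
  calc ∫⁻ ω, ENNReal.ofReal (min ((W ω / c) ^ 2) 1) ∂μ
      ≤ ∫⁻ ω, ∑' j : ℕ,
          (W ⁻¹' Ioi (c * 2⁻¹ ^ (j + 1))).indicator
            (fun _ => ENNReal.ofReal ((2⁻¹ ^ j) ^ 2)) ω ∂μ :=
        lintegral_mono fun ω => ofReal_min_sq_one_le_tsum_indicator (hW0 ω) hc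
    _ = _ := by
        rw [lintegral_tsum fun j =>
          (measurable_const.indicator (hW measurableSet_Ioi)).aemeasurable]
        congr 1 with j
        exact lintegral_indicator_const (hW measurableSet_Ioi) _

lemma ae_summable_of_tsum_lintegral_ne_top {ι : Type*} [Countable ι] {f : ι → Ω → ℝ}
    (hf : ∀ i, Measurable (f i)) (hf0 : ∀ i ω, 0 ≤ f i ω)
    (h : ∑' i, ∫⁻ ω, ENNReal.ofReal (f i ω) ∂μ ≠ ∞) :
    ∀ᵐ ω ∂μ, Summable fun i => f i ω := by
  rw [← lintegral_tsum fun i => (hf i).ennreal_ofReal.aemeasurable] at h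
  filter_upwards [ae_lt_top (Measurable.tsum fun i => (hf i).ennreal_ofReal) h] with ω hω
  simpa [ENNReal.toReal_ofReal (hf0 _ ω)] using ENNReal.summable_toReal hω.ne

lemma ae_summable_min_sq_div_natCast {W : ℕ → Ω → ℝ} (hW : ∀ n, Measurable (W n))
    (hW0 : ∀ n ω, 0 ≤ W n ω) {G : ℝ → ℝ} (hG : AntitoneOn G (Ioi 0))
    (hGint : ∫⁻ t in Ioi 0, ENNReal.ofReal (G t) ≠ ∞)
    (hdom : ∀ n t, 0 < t → μ {ω | t < W n ω} ≤ ENNReal.ofReal (G t)) :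
    ∀ᵐ ω ∂μ, Summable fun n : ℕ => min ((W n ω / n) ^ 2) 1 := by
  set J := ∫⁻ t in Ioi 0, ENNReal.ofReal (G t)
  have hbound : ∑' n : ℕ, ∫⁻ ω, ENNReal.ofReal (min ((W (n + 1) ω / (n + 1 : ℕ)) ^ 2) 1) ∂μ ≤
      ∑' j : ℕ, ENNReal.ofReal (2 * 2⁻¹ ^ j) * J := calc
    _ ≤ ∑' n : ℕ, ∑' j : ℕ, ENNReal.ofReal ((2⁻¹ ^ j) ^ 2) *
          ENNReal.ofReal (G ((n + 1) * 2⁻¹ ^ (j + 1))) := by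
        refine ENNReal.tsum_le_tsum fun n => (lintegral_ofReal_min_sq_one_le (hW _) (hW0 _)
          (by positivity)).trans (ENNReal.tsum_le_tsum fun j => ?_)
        push_cast
        exact mul_le_mul_right (hdom _ _ (by positivity)) _
    _ = ∑' j : ℕ, ENNReal.ofReal (2 * 2⁻¹ ^ j) * (ENNReal.ofReal (2⁻¹ ^ (j + 1)) *
          ∑' n : ℕ, ENNReal.ofReal (G ((n + 1) * 2⁻¹ ^ (j + 1)))) := by
        rw [ENNReal.tsum_comm]
        congr 1 with j
        rw [ENNReal.tsum_mul_left, ← mul_assoc, ← ENNReal.ofReal_mul (by positivity)]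
        ring_nf
    _ ≤ _ := ENNReal.tsum_le_tsum fun j =>
        mul_le_mul_right (ofReal_mul_tsum_le_lintegral_Ioi hG (by positivity)) _
  have hfin : ∑' j : ℕ, ENNReal.ofReal (2 * 2⁻¹ ^ j) * J ≠ ∞ := by
    rw [ENNReal.tsum_mul_right, ← ENNReal.ofReal_tsum_of_nonneg (fun j => by positivity)
      ((summable_geometric_of_lt_one (by norm_num) (by norm_num)).mul_left 2)]
    exact ENNReal.mul_ne_top ENNReal.ofReal_ne_top hGint
  have hmeas : ∀ n, Measurable fun ω => min ((W (n + 1) ω / (n + 1 : ℕ)) ^ 2) 1 := fun n =>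
    (((hW _).div_const _).pow_const 2).min measurable_const
  filter_upwards [ae_summable_of_tsum_lintegral_ne_top hmeas (fun n ω => by positivity)
    (ne_top_of_le_ne_top hfin hbound)] with ω hω
  exact (summable_nat_add_iff 1).mp hω

end

theorem lemma_Y_normalized_sums_general {Ω : Type*} [MeasureSpace Ω]
    (Y : ℕ → Ω → ℝ) (hYm : ∀ n, Measurable (Y n))
    (a : ℕ → ℝ) (ha : ∀ n, 0 < a n ∧ a n ≤ 1) (hanti : Antitone a)
    (ha0 : Tendsto a atTop (𝓝 0))
    (G : ℝ → ℝ) (hGanti : AntitoneOn G (Set.Ici 0))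
    (hGint : IntegrableOn G (Set.Ioi 0))
    (hdom : ∀ n t, 0 ≤ t → ℙ {ω | t < |Y n ω| ^ (a n)} ≤ ENNReal.ofReal (G t)) :
    ∀ᵐ ω ∂ℙ, Tendsto (fun n => (∑ k ∈ Finset.Icc 1 n, Y k ω) / (n : ℝ) ^ (1 / a n))
      atTop (𝓝 0) := by
  obtain ⟨N, hN⟩ :=
    eventually_atTop.mp (ha0.eventually (eventually_le_nhds (b := 1 / 2) (by norm_num)))
  have hV := ae_summable_min_sq_div_natCast (μ := ℙ) (W := fun n ω => |Y n ω| ^ a n)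
    (fun n => (hYm n).abs.pow_const _) (fun n ω => by positivity)
    (hGanti.mono Ioi_subset_Ici_self) hGint.lintegral_lt_top.ne (fun n t ht => hdom n t ht.le)
  set b : ℕ → ℝ := fun n => (n : ℝ) ^ (1 / a n)
  have hb0 : ∀ n, 0 < b (n + 1) := fun n => by positivity
  filter_upwards [hV] with ω hω
  have hmin : Summable fun n => min (|Y n ω| / b n) 1 := by
    refine hω.of_norm_bounded_eventually_nat ?_
    filter_upwards [eventually_ge_atTop N] with n hn
    rw [Real.norm_of_nonneg (by positivity)]
    exact min_div_rpow_one_div_le_min_sq (abs_nonneg _) n.cast_nonneg (ha n).1 (hN n hn)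
  have habs := summable_of_summable_min_one (fun n => by positivity) hmin
  have hkron := tendsto_sum_range_div_of_summable_abs_div (y := fun k => Y (k + 1) ω) hb0
    (fun m n h => monotone_natCast_rpow_one_div (fun n => (ha n).1) hanti (by omega))
    ((tendsto_natCast_rpow_one_div_atTop (fun n => (ha n).1) (fun n => (ha n).2)).comp
      (tendsto_add_atTop_nat 1))
    ((summable_nat_add_iff 1).mpr habs)
  refine (tendsto_add_atTop_iff_nat 1).mp (hkron.congr fun n => ?_)
  rw [Finset.range_eq_Ico, Finset.sum_Ico_add' (fun k => Y k ω), Finset.Ico_add_one_right_eq_Icc]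

theorem lemma_Y_normalized_sums {Ω : Type*} [MeasureSpace Ω]
    [IsProbabilityMeasure (ℙ : Measure Ω)]
    (Y : ℕ → Ω → ℝ) (hYm : ∀ n, Measurable (Y n))
    (a : ℕ → ℝ) (ha : ∀ n, 0 < a n ∧ a n ≤ 1) (hanti : Antitone a)
    (ha0 : Tendsto a atTop (𝓝 0))
    (halog : Tendsto (fun n => a n * Real.log n) atTop atTop)
    (G : ℝ → ℝ) (hG0 : ∀ t, 0 ≤ t → 0 ≤ G t) (hGanti : AntitoneOn G (Set.Ici 0))
    (hGint : IntegrableOn G (Set.Ioi 0))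
    (hdom : ∀ n t, 0 ≤ t → ℙ {ω | t < |Y n ω| ^ (a n)} ≤ ENNReal.ofReal (G t)) :
    ∀ᵐ ω ∂ℙ, Tendsto (fun n => (∑ k ∈ Finset.Icc 1 n, Y k ω) / (n : ℝ) ^ (1 / a n))
      atTop (𝓝 0) :=
  lemma_Y_normalized_sums_general Y hYm a ha hanti ha0 G hGanti hGint hdom
end
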